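/- Let G be a finite group, p a prime with Z ≤ Z(G) a p-subgroup satisfying Z < O_p(G). Then the sets of normal p-chains of even and odd length starting at Z are in G-equivariant, stabilizer-preserving bijection; consequently for each d ≥ 0 and each p-block B of G, the sets C^d(B,Z)_+/G and C^d(B,Z)_- /G have the same cardinality. -/

import Mathlib

open scoped BigOperators Classical

namespace CTC

noncomputable def pCore (p : ℕ) (G : Type) [Group G] : Subgroup G :=
  ⨅ P : Sylow p G, (P : Subgroup G)

structure NormalPChain (p : ℕ) (G : Type) [Group G] (Z : Subgroup G) where
  n : ℕ
  D : Fin (n + 1) → Subgroup G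
  strictMono : StrictMono D
  first : D 0 = Z
  isPGroup : ∀ i, IsPGroup p (D i)
  normalInLast : ∀ i, ((D i).subgroupOf (D (Fin.last n))).Normal

def stabChain {p : ℕ} {G : Type} [Group G] {Z : Subgroup G}
    (δ : NormalPChain p G Z) : Subgroup G :=
  ⨅ i, Subgroup.normalizer (δ.D i : Set G)

def mapChain {p : ℕ} {G : Type} [Group G] {Z : Subgroup G}
    (σ : MulAut G) (hσ : Z.map σ.toMonoidHom = Z)
    (δ : NormalPChain p G Z) : NormalPChain p G Z where
  n := δ.n
  D := fun i => (δ.D i).map σ.toMonoidHom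
  strictMono := by
    intro i j hij
    have h1 : (δ.D i).map σ.toMonoidHom ≤ (δ.D j).map σ.toMonoidHom :=
      Subgroup.map_mono (δ.strictMono hij).le
    have h2 : (δ.D i).map σ.toMonoidHom ≠ (δ.D j).map σ.toMonoidHom := by
      intro h
      exact (δ.strictMono hij).ne (Subgroup.map_injective σ.injective h)
    exact lt_of_le_of_ne h1 h2
  first := by show (δ.D 0).map σ.toMonoidHom = Z; rw [δ.first, hσ]
  isPGroup := fun i => (δ.isPGroup i).map _
  normalInLast := by
    intro i
    have h := δ.normalInLast i
    constructor
    rintro a ha b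
    rw [Subgroup.mem_subgroupOf] at ha ⊢
    obtain ⟨v, hv, hva⟩ := ha
    obtain ⟨u, hu, hub⟩ := b.2
    have hvlast : v ∈ δ.D (Fin.last δ.n) := δ.strictMono.monotone (Fin.le_last i) hv
    have hconj := h.conj_mem ⟨v, hvlast⟩ (by rwa [Subgroup.mem_subgroupOf]) ⟨u, hu⟩
    rw [Subgroup.mem_subgroupOf] at hconj
    refine ⟨u * v * u⁻¹, hconj, ?_⟩
    push_cast
    rw [map_mul, map_mul, map_inv, hva, hub]

theorem map_conjAut_eq {G : Type} [Group G] {Z : Subgroup G}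
    (hZ : Z ≤ Subgroup.center G) (g : G) :
    Z.map (MulAut.conj g).toMonoidHom = Z := by
  ext x
  simp only [Subgroup.mem_map]
  constructor
  · rintro ⟨z, hz, rfl⟩
    have hc := (Subgroup.mem_center_iff.mp (hZ hz)) g
    have : (MulAut.conj g).toMonoidHom z = z := by
      simp only [MulEquiv.coe_toMonoidHom, MulAut.conj_apply]
      rw [hc]; group
    rwa [this]
  · intro hx
    refine ⟨x, hx, ?_⟩
    have hc := (Subgroup.mem_center_iff.mp (hZ hx)) g
    simp only [MulEquiv.coe_toMonoidHom, MulAut.conj_apply]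
    rw [hc]; group

/-- Conjugation action of `G` on normal `p`-chains starting at a central `Z`. -/
noncomputable def conjChain {p : ℕ} {G : Type} [Group G] {Z : Subgroup G}
    (hZ : Z ≤ Subgroup.center G) (g : G) (δ : NormalPChain p G Z) :
    NormalPChain p G Z :=
  mapChain (MulAut.conj g) (map_conjAut_eq hZ g) δ

/-- The `G`-orbit relation on pairs `(δ, ϑ)` (with `ϑ` taken from an abstract
`G`-set `X`), restricted to a subset. -/
def pairRel (p : ℕ) {G X : Type} [Group G] [MulAction G X] {Z : Subgroup G}
    (hZ : Z ≤ Subgroup.center G) (P : NormalPChain p G Z × X → Prop) :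
    {a : NormalPChain p G Z × X // P a} → {a : NormalPChain p G Z × X // P a} → Prop :=
  fun a b => ∃ g : G, conjChain hZ g a.1.1 = b.1.1 ∧ g • a.1.2 = b.1.2

/-!
Let `R = O_p(G)`. A normal `p`-chain is determined by its set `S` of terms, with top `sSup S`.
Its pivot `X` is the group of elements of `R` that centralize `R ⊔ sSup S` modulo `Z`. Since
`Z < R`, the `p`-group `(R ⊔ sSup S)/Z` acts on `R/Z` by conjugation and fixes a nontrivial
element, so `X` is not contained in `Z`. As `[X, D] ⊆ Z ⊆ D` for every term `D`, `X` normalizes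
every term. Let `B` be the largest term not containing `X`, and set `Y = B ⊔ X`; `Y` is a
`p`-group, and a term contains `X` exactly when it contains `Y`. So `S ∆ {Y}` is again a normal
`p`-chain, and its length has the other parity. Adding or removing `Y` does not change
`R ⊔ sSup S`, so `X`, `B` and `Y` stay the same and the toggle is an involution. All three
subgroups are defined canonically from `S`, so the toggle commutes with conjugation, and
everything that normalizes every term of `S` also normalizes `Y`, which keeps the stabilizer
unchanged. Finally, `(δ, ϑ) ↦ (f δ, ϑ)` maps `G`-orbits of even pairs bijectively onto
`G`-orbits of odd pairs.
-/

open Subgroup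
open scoped commutatorElement

theorem _root_.IsChain.sSup_mem {α : Type*} [CompleteLattice α] {s : Set α}
    (hs : IsChain (· ≤ ·) s) (hfin : s.Finite) (hne : s.Nonempty) : sSup s ∈ s := by
  refine SupClosed.sSup_mem_of_nonempty (fun a ha b hb => ?_) hfin hne subset_rfl
  rcases hs.total ha hb with h | h
  · rwa [sup_of_le_right h]
  · rwa [sup_of_le_left h]

theorem _root_.sup_sSup_insert_of_le {α : Type*} [CompleteLattice α] {r a : α} {s : Set α}
    (h : a ≤ r ⊔ sSup s) : r ⊔ sSup (insert a s) = r ⊔ sSup s := by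
  rw [sSup_insert, sup_left_comm, sup_eq_right.mpr h]

theorem _root_.Set.insert_symmDiff_singleton {α : Type*} (s : Set α) (a : α) :
    insert a (symmDiff s {a}) = insert a s := by
  ext x
  by_cases hx : x = a <;> simp [Set.mem_symmDiff, hx]

theorem _root_.Set.even_ncard_symmDiff_singleton {α : Type*} {s : Set α} (hs : s.Finite)
    (a : α) : Even (symmDiff s {a}).ncard ↔ ¬ Even s.ncard := by
  by_cases ha : a ∈ s
  · have hdiff : symmDiff s {a} = s \ {a} := by
      ext x
      by_cases hx : x = a <;> simp [Set.mem_symmDiff, hx, ha]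
    obtain ⟨k, hk⟩ : ∃ k, s.ncard = k + 1 :=
      Nat.exists_eq_add_one.mpr ((Set.ncard_pos hs).mpr ⟨a, ha⟩)
    rw [hdiff, Set.ncard_sdiff_singleton_of_mem ha, hk, Nat.add_sub_cancel, Nat.even_add_one,
      not_not]
  · have hins : symmDiff s {a} = insert a s := by
      ext x
      by_cases hx : x = a <;> simp [Set.mem_symmDiff, hx, ha]
    rw [hins, Set.ncard_insert_of_notMem ha hs, Nat.even_add_one]

theorem card_quotient_eqvGen_congr {α β : Type*} {r : α → α → Prop} {r' : β → β → Prop}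
    (e : α ≃ β) (h : ∀ a b, r a b ↔ r' (e a) (e b)) :
    Nat.card (Quotient (Relation.EqvGen.setoid r)) =
      Nat.card (Quotient (Relation.EqvGen.setoid r')) := by
  refine Nat.card_congr (Quotient.congr e fun a b => ⟨fun H => ?_, fun H => ?_⟩)
  · exact Quot.eqvGen_exact (congrArg (Quot.congr e h) (Quot.eqvGen_sound H))
  · exact Quot.eqvGen_exact ((Quot.congr e h).injective (Quot.eqvGen_sound H))

section GroupTheory

variable {G : Type*} [Group G]

theorem normal_of_le_center {Z : Subgroup G} (hZ : Z ≤ center G) : Z.Normal where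
  conj_mem z hz g := by rwa [mem_center_iff.mp (hZ hz) g, mul_inv_cancel_right]

theorem mapSubgroup_conj_eq_self (H : Subgroup G) [H.Normal] (g : G) :
    (MulAut.conj g).mapSubgroup H = H :=
  mem_normalizer_iff_map_conj_eq.mp (H.normalizer_eq_top ▸ mem_top g)

theorem _root_.IsPGroup.exists_ne_one_mem_centralizer {p : ℕ} [Fact p.Prime] [Finite G]
    {N P : Subgroup G} (hP : IsPGroup p P) (hNP : N ≤ P) (hPN : P ≤ normalizer (N : Set G))
    (hN : N ≠ ⊥) : ∃ x ∈ N, x ∈ centralizer (P : Set G) ∧ x ≠ 1 := by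
  let _ : MulAction P N := MulAction.compHom N (inclusion hPN)
  have hdvd : p ∣ Nat.card N := by
    have : Nontrivial N := (nontrivial_iff_ne_bot N).mpr hN
    obtain ⟨k, hk, hcard⟩ := ((hP.to_le hNP).nontrivial_iff_card).mp this
    exact hcard ▸ dvd_pow_self p hk.ne'
  have hfix1 : (1 : N) ∈ MulAction.fixedPoints P N := fun q => Subtype.ext (by
    show (q : G) * 1 * (q : G)⁻¹ = 1
    group)
  obtain ⟨b, hb, hb1⟩ := hP.exists_fixed_point_of_prime_dvd_card_of_fixed_point N hdvd hfix1
  refine ⟨b, b.2, mem_centralizer_iff.mpr fun q hq => ?_, fun h => hb1 (Subtype.ext h.symm)⟩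
  exact mul_inv_eq_iff_eq_mul.mp (congrArg Subtype.val (hb ⟨q, hq⟩))

end GroupTheory

section pCore

variable {p : ℕ} {G : Type} [Group G]

instance pCore_normal : (pCore p G).Normal where
  conj_mem x hx g := mem_iInf.mpr fun P => by
    have hx' := mem_iInf.mp hx (g⁻¹ • P)
    rwa [Sylow.coe_subgroup_smul, mem_pointwise_smul_iff_inv_smul_mem, MulAut.smul_def,
      ← map_inv, inv_inv, MulAut.conj_apply] at hx'

theorem isPGroup_pCore : IsPGroup p (pCore p G) :=
  let ⟨P⟩ := (Sylow.nonempty : Nonempty (Sylow p G))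
  P.isPGroup'.to_le (iInf_le _ P)

end pCore

section CentralizerMod

variable {G : Type*} [Group G] (Z : Subgroup G) [Z.Normal]

def centralizerMod (Q : Subgroup G) : Subgroup G :=
  (centralizer (Q.map (QuotientGroup.mk' Z) : Set (G ⧸ Z))).comap (QuotientGroup.mk' Z)

variable {Z}

theorem mem_centralizerMod {Q : Subgroup G} {x : G} :
    x ∈ centralizerMod Z Q ↔ ∀ h ∈ Q, ⁅x, h⁆ ∈ Z := by
  simp only [centralizerMod, mem_comap, mem_centralizer_iff, coe_map, Set.mem_image,
    SetLike.mem_coe, forall_exists_index, and_imp, forall_apply_eq_imp_iff₂]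
  refine forall₂_congr fun h _ => ?_
  rw [← QuotientGroup.eq_one_iff, ← QuotientGroup.mk'_apply, map_commutatorElement,
    commutatorElement_eq_one_iff_mul_comm, eq_comm]

theorem mapSubgroup_centralizerMod {σ : G ≃* G} (hσ : σ.mapSubgroup Z = Z) (Q : Subgroup G) :
    σ.mapSubgroup (centralizerMod Z Q) = centralizerMod Z (σ.mapSubgroup Q) := by
  rw [MulEquiv.coe_mapSubgroup] at hσ ⊢
  ext y
  obtain ⟨x, rfl⟩ := σ.surjective y
  have hσZ : ∀ z, σ z ∈ Z ↔ z ∈ Z := fun z => by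
    conv_lhs => rw [← hσ]
    rw [mem_map_equiv, MulEquiv.symm_apply_apply]
  simp only [mem_map_equiv, MulEquiv.symm_apply_apply, mem_centralizerMod]
  conv_rhs => rw [σ.surjective.forall]
  simp only [MulEquiv.symm_apply_apply, ← map_commutatorElement, hσZ]

theorem centralizerMod_le_normalizer {A Q : Subgroup G} (hZA : Z ≤ A) (hAQ : A ≤ Q) :
    centralizerMod Z Q ≤ normalizer (A : Set G) := by
  have hconj : ∀ x ∈ centralizerMod Z Q, ∀ h ∈ A, x * h * x⁻¹ ∈ A := fun x hx h hh => by
    have := A.mul_mem (hZA (mem_centralizerMod.mp hx h (hAQ hh))) hh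
    rwa [commutatorElement_def, inv_mul_cancel_right] at this
  intro x hx
  rw [mem_normalizer_iff]
  refine fun h => ⟨hconj x hx h, fun hh => ?_⟩
  simpa [mul_assoc] using hconj x⁻¹ (inv_mem hx) _ hh

theorem le_normalizer_centralizerMod (Q : Subgroup G) :
    Q ≤ normalizer (centralizerMod Z Q : Set G) := fun g hg => by
  rw [mem_normalizer_iff_map_conj_eq]
  exact (mapSubgroup_centralizerMod (mapSubgroup_conj_eq_self Z g) Q).trans
    (congrArg _ (mem_normalizer_iff_map_conj_eq.mp (le_normalizer hg)))

theorem exists_mem_centralizerMod_notMem {p : ℕ} [Fact p.Prime] [Finite G] {R Q : Subgroup G}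
    [R.Normal] (hZR : Z < R) (hRQ : R ≤ Q) (hQ : IsPGroup p Q) :
    ∃ x ∈ R, x ∈ centralizerMod Z Q ∧ x ∉ Z := by
  set π := QuotientGroup.mk' Z
  have : (R.map π).Normal := .map inferInstance π (QuotientGroup.mk'_surjective Z)
  have hR : R.map π ≠ ⊥ := fun h =>
    hZR.not_ge (by rwa [← QuotientGroup.ker_mk' Z, ← Subgroup.map_eq_bot_iff])
  obtain ⟨y, hyR, hyC, hy1⟩ := (hQ.map π).exists_ne_one_mem_centralizer (map_mono hRQ)
    (by rw [normalizer_eq_top]; exact le_top) hR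
  obtain ⟨x, hx, rfl⟩ := mem_map.mp hyR
  exact ⟨x, hx, hyC, fun hxZ => hy1 ((QuotientGroup.eq_one_iff x).mpr hxZ)⟩

end CentralizerMod

section ChainSets

variable {G : Type*} [Group G]

structure IsNormalPChainSet (p : ℕ) (Z : Subgroup G) (S : Set (Subgroup G)) : Prop where
  finite : S.Finite
  isChain : IsChain (· ≤ ·) S
  isLeast : IsLeast S Z
  isPGroup : ∀ A ∈ S, IsPGroup p A
  le_normalizer : ∀ A ∈ S, ∀ B ∈ S, B ≤ normalizer (A : Set G)

variable {p : ℕ} {Z : Subgroup G} {S T : Set (Subgroup G)}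

theorem IsNormalPChainSet.mono (hS : IsNormalPChainSet p Z S) (hTS : T ⊆ S) (hZ : Z ∈ T) :
    IsNormalPChainSet p Z T where
  finite := hS.finite.subset hTS
  isChain := hS.isChain.mono hTS
  isLeast := ⟨hZ, fun _ hA => hS.isLeast.2 (hTS hA)⟩
  isPGroup A hA := hS.isPGroup A (hTS hA)
  le_normalizer A hA B hB := hS.le_normalizer A (hTS hA) B (hTS hB)

theorem IsNormalPChainSet.sSup_mem (hS : IsNormalPChainSet p Z S) : sSup S ∈ S :=
  hS.isChain.sSup_mem hS.finite ⟨Z, hS.isLeast.1⟩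

end ChainSets

namespace NormalPChain

variable {p : ℕ} {G : Type} [Group G] {Z : Subgroup G}

theorem isNormalPChainSet_range (δ : NormalPChain p G Z) :
    IsNormalPChainSet p Z (Set.range δ.D) where
  finite := Set.finite_range _
  isChain := δ.strictMono.monotone.isChain_range
  isLeast := ⟨⟨0, δ.first⟩, by
    rintro _ ⟨i, rfl⟩
    exact δ.first.symm.trans_le (δ.strictMono.monotone (Fin.zero_le i))⟩
  isPGroup := by
    rintro _ ⟨i, rfl⟩
    exact δ.isPGroup i
  le_normalizer := by
    rintro _ ⟨i, rfl⟩ _ ⟨j, rfl⟩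
    exact (δ.strictMono.monotone (Fin.le_last j)).trans
      ((normal_subgroupOf_iff_le_normalizer (δ.strictMono.monotone (Fin.le_last i))).mp
        (δ.normalInLast i))

theorem ncard_range (δ : NormalPChain p G Z) : (Set.range δ.D).ncard = δ.n + 1 := by
  rw [Set.ncard_range_of_injective δ.strictMono.injective, Nat.card_eq_fintype_card,
    Fintype.card_fin]

theorem ext_of_range_eq {δ₁ δ₂ : NormalPChain p G Z} (h : Set.range δ₁.D = Set.range δ₂.D) :
    δ₁ = δ₂ := by
  have hn : δ₁.n = δ₂.n := by simpa [ncard_range] using congrArg Set.ncard h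
  cases δ₁; cases δ₂
  subst hn
  obtain rfl := (StrictMono.range_inj ‹_› ‹_›).mp h
  rfl

theorem exists_range_eq {S : Set (Subgroup G)} (hS : IsNormalPChainSet p Z S) :
    ∃ δ : NormalPChain p G Z, Set.range δ.D = S := by
  let _ := hS.isChain.linearOrder
  have := hS.finite.fintype
  obtain ⟨n, hn⟩ : ∃ n, Fintype.card S = n + 1 :=
    Nat.exists_eq_add_one.mpr (Fintype.card_pos_iff.mpr ⟨⟨Z, hS.isLeast.1⟩⟩)
  let e := Fintype.orderIsoFinOfCardEq S hn
  have hmono : StrictMono fun i => (e i : Subgroup G) := fun i j hij => e.strictMono hij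
  refine ⟨⟨n, fun i => e i, hmono, ?_, fun i => hS.isPGroup _ (e i).2, fun i => ?_⟩, ?_⟩
  · obtain ⟨j, hj⟩ := e.surjective ⟨Z, hS.isLeast.1⟩
    exact le_antisymm ((hmono.monotone (Fin.zero_le j)).trans_eq (congrArg Subtype.val hj))
      (hS.isLeast.2 (e 0).2)
  · exact (normal_subgroupOf_iff_le_normalizer (hmono.monotone (Fin.le_last i))).mpr
      (hS.le_normalizer _ (e i).2 _ (e _).2)
  · ext A
    refine ⟨?_, fun hA => ⟨e.symm ⟨A, hA⟩, by simp⟩⟩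
    rintro ⟨i, rfl⟩
    exact (e i).2

theorem stabChain_eq_iInf_range (δ : NormalPChain p G Z) :
    stabChain δ = ⨅ A ∈ Set.range δ.D, normalizer (A : Set G) := by
  rw [stabChain, iInf_range]

theorem range_conjChain (hZ : Z ≤ center G) (g : G) (δ : NormalPChain p G Z) :
    Set.range (conjChain hZ g δ).D = (MulAut.conj g).mapSubgroup '' Set.range δ.D :=
  Set.range_comp (MulAut.conj g).mapSubgroup δ.D

end NormalPChain

section Toggle

variable {G : Type*} [Group G] (Z R : Subgroup G) [Z.Normal] (S : Set (Subgroup G))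

def pivot : Subgroup G := R ⊓ centralizerMod Z (R ⊔ sSup S)

def pivotBase : Subgroup G := sSup {A ∈ S | ¬ pivot Z R S ≤ A}

def pivotTerm : Subgroup G := pivotBase Z R S ⊔ pivot Z R S

def toggle : Set (Subgroup G) := symmDiff S {pivotTerm Z R S}

variable {Z R S}

section Naturality

variable {σ : G ≃* G}

theorem mapSubgroup_pivot (hσZ : σ.mapSubgroup Z = Z) (hσR : σ.mapSubgroup R = R) :
    σ.mapSubgroup (pivot Z R S) = pivot Z R (σ.mapSubgroup '' S) := by
  rw [pivot, pivot, InfHomClass.map_inf, hσR, mapSubgroup_centralizerMod hσZ,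
    SupHomClass.map_sup, hσR, map_sSup]

theorem mapSubgroup_pivotBase (hσZ : σ.mapSubgroup Z = Z) (hσR : σ.mapSubgroup R = R) :
    σ.mapSubgroup (pivotBase Z R S) = pivotBase Z R (σ.mapSubgroup '' S) := by
  rw [pivotBase, pivotBase, map_sSup, ← mapSubgroup_pivot hσZ hσR]
  congr 1
  ext B
  constructor
  · rintro ⟨A, ⟨hA, hXA⟩, rfl⟩
    exact ⟨⟨A, hA, rfl⟩, by rwa [OrderIso.le_iff_le]⟩
  · rintro ⟨⟨A, hA, rfl⟩, hXA⟩
    exact ⟨A, ⟨hA, by rwa [OrderIso.le_iff_le] at hXA⟩, rfl⟩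

theorem mapSubgroup_pivotTerm (hσZ : σ.mapSubgroup Z = Z) (hσR : σ.mapSubgroup R = R) :
    σ.mapSubgroup (pivotTerm Z R S) = pivotTerm Z R (σ.mapSubgroup '' S) := by
  rw [pivotTerm, pivotTerm, SupHomClass.map_sup, mapSubgroup_pivotBase hσZ hσR,
    mapSubgroup_pivot hσZ hσR]

theorem toggle_image (hσZ : σ.mapSubgroup Z = Z) (hσR : σ.mapSubgroup R = R) :
    toggle Z R (σ.mapSubgroup '' S) = σ.mapSubgroup '' toggle Z R S := by
  rw [toggle, toggle, Set.image_symmDiff σ.mapSubgroup.injective, Set.image_singleton,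
    mapSubgroup_pivotTerm hσZ hσR]

end Naturality

theorem iInf_normalizer_le_normalizer_pivotTerm [R.Normal] :
    ⨅ A ∈ S, normalizer (A : Set G) ≤ normalizer (pivotTerm Z R S : Set G) := fun g hg => by
  have hfix : (MulAut.conj g).mapSubgroup '' S = S := by
    refine (Set.image_congr fun A hA => ?_).trans (Set.image_id S)
    exact mem_normalizer_iff_map_conj_eq.mp (mem_iInf.mp (mem_iInf.mp hg A) hA)
  rw [mem_normalizer_iff_map_conj_eq]
  exact (mapSubgroup_pivotTerm (mapSubgroup_conj_eq_self Z g)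
    (mapSubgroup_conj_eq_self R g)).trans (congrArg _ hfix)

variable {p : ℕ}

theorem pivot_le_normalizer (hS : IsNormalPChainSet p Z S) {A : Subgroup G} (hA : A ∈ S) :
    pivot Z R S ≤ normalizer (A : Set G) :=
  inf_le_right.trans
    (centralizerMod_le_normalizer (hS.isLeast.2 hA) ((le_sSup hA).trans le_sup_right))

theorem le_normalizer_pivot [R.Normal] {A : Subgroup G} (hA : A ∈ S) :
    A ≤ normalizer (pivot Z R S : Set G) :=
  (le_inf (R.normalizer_eq_top ▸ le_top)
    (((le_sSup hA).trans le_sup_right).trans (le_normalizer_centralizerMod _))).trans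
    inf_normalizer_le_normalizer_inf

theorem not_pivot_le [Finite G] [Fact p.Prime] [R.Normal] (hR : IsPGroup p R) (hZR : Z < R)
    (hS : IsNormalPChainSet p Z S) : ¬ pivot Z R S ≤ Z := fun h => by
  obtain ⟨x, hxR, hxC, hxZ⟩ := exists_mem_centralizerMod_notMem hZR le_sup_left
    (hR.to_sup_of_normal_left (hS.isPGroup _ hS.sSup_mem))
  exact hxZ (h ⟨hxR, hxC⟩)

theorem pivotBase_mem_sep (hS : IsNormalPChainSet p Z S) (hX : ¬ pivot Z R S ≤ Z) :
    pivotBase Z R S ∈ {A ∈ S | ¬ pivot Z R S ≤ A} :=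
  (hS.isChain.mono (Set.sep_subset _ _)).sSup_mem (hS.finite.subset (Set.sep_subset _ _))
    ⟨Z, hS.isLeast.1, hX⟩

theorem pivotTerm_le (hS : IsNormalPChainSet p Z S) (hX : ¬ pivot Z R S ≤ Z) {A : Subgroup G}
    (hA : A ∈ S) (hXA : pivot Z R S ≤ A) : pivotTerm Z R S ≤ A := by
  have hB := pivotBase_mem_sep hS hX
  exact sup_le ((hS.isChain.total hB.1 hA).resolve_right fun h => hB.2 (hXA.trans h)) hXA

theorem le_pivotTerm {A : Subgroup G} (hA : A ∈ S) (hXA : ¬ pivot Z R S ≤ A) :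
    A ≤ pivotTerm Z R S :=
  (le_sSup (show A ∈ {A ∈ S | ¬ pivot Z R S ≤ A} from ⟨hA, hXA⟩)).trans le_sup_left

theorem mem_toggle {A : Subgroup G} (hA : A ∈ S) (hXA : ¬ pivot Z R S ≤ A) :
    A ∈ toggle Z R S :=
  Or.inl ⟨hA, fun h => hXA ((Set.mem_singleton_iff.mp h).symm ▸ le_sup_right)⟩

theorem pivotTerm_le_sup_sSup (hS : IsNormalPChainSet p Z S) (hX : ¬ pivot Z R S ≤ Z) :
    pivotTerm Z R S ≤ R ⊔ sSup S :=
  sup_le ((le_sSup (pivotBase_mem_sep hS hX).1).trans le_sup_right)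
    (inf_le_left.trans le_sup_left)

theorem isNormalPChainSet_insert_pivotTerm [R.Normal] (hR : IsPGroup p R)
    (hS : IsNormalPChainSet p Z S) (hX : ¬ pivot Z R S ≤ Z) :
    IsNormalPChainSet p Z (insert (pivotTerm Z R S) S) := by
  have hB := (pivotBase_mem_sep hS hX).1
  refine
    { finite := hS.finite.insert _
      isChain := hS.isChain.insert fun A hA _ => ?_
      isLeast := ⟨Set.mem_insert_of_mem _ hS.isLeast.1, ?_⟩
      isPGroup := Set.forall_mem_insert.mpr ⟨?_, hS.isPGroup⟩
      le_normalizer := Set.forall_mem_insert.mpr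
        ⟨?_, fun A hA => Set.forall_mem_insert.mpr ⟨?_, hS.le_normalizer A hA⟩⟩ }
  · by_cases hXA : pivot Z R S ≤ A
    · exact .inl (pivotTerm_le hS hX hA hXA)
    · exact .inr (le_pivotTerm hA hXA)
  · rw [lowerBounds_insert]
    exact ⟨(hS.isLeast.2 hB).trans le_sup_left, hS.isLeast.2⟩
  · exact (hR.to_sup_of_normal_left (hS.isPGroup _ hS.sSup_mem)).to_le
      (pivotTerm_le_sup_sSup hS hX)
  · refine Set.forall_mem_insert.mpr ⟨le_normalizer, fun A hA => ?_⟩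
    exact (le_inf (hS.le_normalizer _ hB _ hA) (le_normalizer_pivot hA)).trans
      (normalizer_inf_normalizer_le_normalizer_sup _ _)
  · exact sup_le (hS.le_normalizer A hA _ hB) (pivot_le_normalizer hS hA)

theorem isNormalPChainSet_toggle [R.Normal] (hR : IsPGroup p R)
    (hS : IsNormalPChainSet p Z S) (hX : ¬ pivot Z R S ≤ Z) :
    IsNormalPChainSet p Z (toggle Z R S) :=
  (isNormalPChainSet_insert_pivotTerm hR hS hX).mono
    (Set.union_singleton ▸ Set.symmDiff_subset_union) (mem_toggle hS.isLeast.1 hX)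

theorem sup_sSup_toggle (hS : IsNormalPChainSet p Z S) (hX : ¬ pivot Z R S ≤ Z) :
    R ⊔ sSup (toggle Z R S) = R ⊔ sSup S := by
  have hB := pivotBase_mem_sep hS hX
  have hle : pivotTerm Z R S ≤ R ⊔ sSup (toggle Z R S) :=
    sup_le ((le_sSup (mem_toggle hB.1 hB.2)).trans le_sup_right) (inf_le_left.trans le_sup_left)
  rw [← sup_sSup_insert_of_le hle, toggle, Set.insert_symmDiff_singleton,
    sup_sSup_insert_of_le (pivotTerm_le_sup_sSup hS hX)]

theorem pivot_toggle (hS : IsNormalPChainSet p Z S) (hX : ¬ pivot Z R S ≤ Z) :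
    pivot Z R (toggle Z R S) = pivot Z R S := by
  rw [pivot, pivot, sup_sSup_toggle hS hX]

theorem pivotTerm_toggle (hS : IsNormalPChainSet p Z S) (hX : ¬ pivot Z R S ≤ Z) :
    pivotTerm Z R (toggle Z R S) = pivotTerm Z R S := by
  have hbase : {A ∈ toggle Z R S | ¬ pivot Z R S ≤ A} = {A ∈ S | ¬ pivot Z R S ≤ A} := by
    ext A
    by_cases hA : A = pivotTerm Z R S
    · simp [hA, pivotTerm]
    · simp [toggle, Set.mem_symmDiff, hA]
  rw [pivotTerm, pivotTerm, pivotBase, pivotBase, pivot_toggle hS hX, hbase]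

theorem toggle_toggle (hS : IsNormalPChainSet p Z S) (hX : ¬ pivot Z R S ≤ Z) :
    toggle Z R (toggle Z R S) = S := by
  rw [toggle, pivotTerm_toggle hS hX, toggle, symmDiff_symmDiff_cancel_right]

theorem iInf_normalizer_toggle [R.Normal] (hS : IsNormalPChainSet p Z S)
    (hX : ¬ pivot Z R S ≤ Z) :
    ⨅ A ∈ toggle Z R S, normalizer (A : Set G) = ⨅ A ∈ S, normalizer (A : Set G) := by
  have hins : ∀ T : Set (Subgroup G), pivotTerm Z R T = pivotTerm Z R S →
      ⨅ A ∈ insert (pivotTerm Z R S) T, normalizer (A : Set G) =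
        ⨅ A ∈ T, normalizer (A : Set G) := fun T hT => by
    rw [iInf_insert, inf_eq_right, ← hT]
    exact iInf_normalizer_le_normalizer_pivotTerm
  rw [← hins _ (pivotTerm_toggle hS hX), toggle, Set.insert_symmDiff_singleton, hins _ rfl]

end Toggle

section Pairing

variable {p : ℕ} {G : Type} [Group G] [Finite G] [Fact p.Prime] {Z R : Subgroup G} [Z.Normal]
  [R.Normal]

theorem isNormalPChainSet_toggle_range (hR : IsPGroup p R) (hZR : Z < R)
    (δ : NormalPChain p G Z) : IsNormalPChainSet p Z (toggle Z R (Set.range δ.D)) :=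
  isNormalPChainSet_toggle hR δ.isNormalPChainSet_range
    (not_pivot_le hR hZR δ.isNormalPChainSet_range)

noncomputable def pairing (hR : IsPGroup p R) (hZR : Z < R) (δ : NormalPChain p G Z) :
    NormalPChain p G Z :=
  (NormalPChain.exists_range_eq (isNormalPChainSet_toggle_range hR hZR δ)).choose

theorem range_pairing (hR : IsPGroup p R) (hZR : Z < R) (δ : NormalPChain p G Z) :
    Set.range (pairing hR hZR δ).D = toggle Z R (Set.range δ.D) :=
  (NormalPChain.exists_range_eq (isNormalPChainSet_toggle_range hR hZR δ)).choose_spec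

theorem pairing_involutive (hR : IsPGroup p R) (hZR : Z < R) :
    Function.Involutive (pairing hR hZR) := fun δ =>
  NormalPChain.ext_of_range_eq (by
    rw [range_pairing, range_pairing, toggle_toggle δ.isNormalPChainSet_range
      (not_pivot_le hR hZR δ.isNormalPChainSet_range)])

theorem even_pairing_n (hR : IsPGroup p R) (hZR : Z < R) (δ : NormalPChain p G Z) :
    Even (pairing hR hZR δ).n ↔ ¬ Even δ.n := by
  have h := Set.even_ncard_symmDiff_singleton δ.isNormalPChainSet_range.finite
    (pivotTerm Z R (Set.range δ.D))
  rwa [← toggle, ← range_pairing hR hZR, NormalPChain.ncard_range, NormalPChain.ncard_range,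
    Nat.even_add_one, Nat.even_add_one, not_iff_not] at h

theorem stabChain_pairing (hR : IsPGroup p R) (hZR : Z < R) (δ : NormalPChain p G Z) :
    stabChain (pairing hR hZR δ) = stabChain δ := by
  rw [NormalPChain.stabChain_eq_iInf_range, NormalPChain.stabChain_eq_iInf_range, range_pairing,
    iInf_normalizer_toggle δ.isNormalPChainSet_range
      (not_pivot_le hR hZR δ.isNormalPChainSet_range)]

theorem pairing_conjChain (hR : IsPGroup p R) (hZR : Z < R) (hZ : Z ≤ center G) (g : G)
    (δ : NormalPChain p G Z) :
    pairing hR hZR (conjChain hZ g δ) = conjChain hZ g (pairing hR hZR δ) :=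
  NormalPChain.ext_of_range_eq (by
    rw [range_pairing, NormalPChain.range_conjChain, NormalPChain.range_conjChain, range_pairing,
      toggle_image (mapSubgroup_conj_eq_self Z g) (mapSubgroup_conj_eq_self R g)])

end Pairing

theorem card_quotient_pairRel_eq {p : ℕ} {G X : Type} [Group G] [MulAction G X] {Z : Subgroup G}
    (hZ : Z ≤ center G) {f : NormalPChain p G Z → NormalPChain p G Z}
    (hf : Function.Involutive f) (hfg : ∀ g δ, f (conjChain hZ g δ) = conjChain hZ g (f δ))
    {P₁ P₂ : NormalPChain p G Z × X → Prop} (hP : ∀ δ x, P₁ (δ, x) ↔ P₂ (f δ, x)) :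
    Nat.card (Quotient (Relation.EqvGen.setoid (pairRel p hZ P₁))) =
      Nat.card (Quotient (Relation.EqvGen.setoid (pairRel p hZ P₂))) :=
  card_quotient_eqvGen_congr
    ((Equiv.prodCongr hf.toPerm (Equiv.refl X)).subtypeEquiv fun ⟨δ, x⟩ => hP δ x)
    fun a b => exists_congr fun g => and_congr_left' (by simp [← hfg, hf.injective.eq_iff])

/-- `F H` plays the role of the characters of `H` of `p`-defect `d` whose Brauer-induced block
is `B`. -/
theorem chain_pairing_orbit_count_general {G X : Type} [Group G] [Fintype G] [MulAction G X]
    (p : ℕ) (hp : p.Prime) (Z : Subgroup G)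
    (hZ : Z ≤ Subgroup.center G) (hlt : Z < pCore p G)
    (F : Subgroup G → Set X) :
    (∃ f : NormalPChain p G Z → NormalPChain p G Z,
      (∀ δ, f (f δ) = δ) ∧
      (∀ δ, Even (f δ).n ↔ ¬ Even δ.n) ∧
      (∀ δ, stabChain (f δ) = stabChain δ) ∧
      (∀ (g : G) (δ), f (conjChain hZ g δ) = conjChain hZ g (f δ))) ∧
    Nat.card (Quotient (Relation.EqvGen.setoid
        (pairRel p hZ (fun a => Even a.1.n ∧ a.2 ∈ F (stabChain a.1))))) =
      Nat.card (Quotient (Relation.EqvGen.setoid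
        (pairRel p hZ (fun a => ¬ Even a.1.n ∧ a.2 ∈ F (stabChain a.1))))) := by
  have : Fact p.Prime := ⟨hp⟩
  have : Z.Normal := normal_of_le_center hZ
  have hR : IsPGroup p (pCore p G) := isPGroup_pCore
  refine ⟨⟨pairing hR hlt, pairing_involutive hR hlt, even_pairing_n hR hlt,
    stabChain_pairing hR hlt, pairing_conjChain hR hlt hZ⟩,
    card_quotient_pairRel_eq hZ (pairing_involutive hR hlt) (pairing_conjChain hR hlt hZ)
    fun δ x => ?_⟩
  rw [stabChain_pairing, even_pairing_n, not_not]

/-- for a central `p`-subgroup `Z < O_p(G)` there is a `G`-equivariant,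
stabilizer-preserving, parity-swapping bijection on normal `p`-chains starting at `Z`;
consequently, for every `d ≥ 0` and every `p`-block `B` (abstracted here by any
conjugation-equivariant assignment `F` of character sets to stabilizer subgroups, as
`C^d(B,Z)_ε` depends on `δ` only through its parity and `G_δ`), the sets
`C^d(B,Z)₊ / G` and `C^d(B,Z)₋ / G` have the same cardinality. -/
theorem chain_pairing_orbit_count {G X : Type} [Group G] [Fintype G] [MulAction G X]
    (p : ℕ) (hp : p.Prime) (Z : Subgroup G)
    (hZ : Z ≤ Subgroup.center G) (hZp : IsPGroup p Z) (hlt : Z < pCore p G)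
    (F : Subgroup G → Set X)
    (hF : ∀ (g : G) (H : Subgroup G),
      F (H.map (MulAut.conj g).toMonoidHom) = (g • ·) '' F H) :
    (∃ f : NormalPChain p G Z → NormalPChain p G Z,
      (∀ δ, f (f δ) = δ) ∧
      (∀ δ, Even (f δ).n ↔ ¬ Even δ.n) ∧
      (∀ δ, stabChain (f δ) = stabChain δ) ∧
      (∀ (g : G) (δ), f (conjChain hZ g δ) = conjChain hZ g (f δ))) ∧
    Nat.card (Quotient (Relation.EqvGen.setoid
        (pairRel p hZ (fun a => Even a.1.n ∧ a.2 ∈ F (stabChain a.1))))) =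
      Nat.card (Quotient (Relation.EqvGen.setoid
        (pairRel p hZ (fun a => ¬ Even a.1.n ∧ a.2 ∈ F (stabChain a.1))))) :=
  chain_pairing_orbit_count_general p hp Z hZ hlt F

end CTC
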